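/- Let α > 0, κ > 0 and β, η ∈ ℝ with 4κ(κ + β + η) + α² > 0, and define g(d) = log(1 + αd) + (καd² − (β+η)d)/(1 + αd) for real d with 1 + αd > 0, and d̂ = (−α − 2κ + √(4κ(κ+β+η) + α²))/(2κα). Then g is monotone nonincreasing on (−1/α, d̂] ∩ (−1/α, ∞) and monotone nondecreasing on [d̂, ∞) ∩ (−1/α, ∞); in particular, if d̂ > −1/α then g attains its minimum over (−1/α, ∞) at d̂, and if d̂ ≤ −1/α then g is monotone nondecreasing on all of (−1/α, ∞). -/

import Mathlib

/-!
The derivative of `g` is `N(d) / (1 + α d)²` with the quadratic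
`N(d) = κα²d² + α(2κ + α)d + (α - (β + η))`, whose roots are `d̂` and
`d₋ = (-α - 2κ - √(4κ(κ + β + η) + α²)) / (2κα) ≤ -1/α`. So on the domain `d > -1/α` the
derivative has the sign of `d - d̂`.
-/

open Real Set

theorem monotoneOn_of_forall_hasDerivAt_nonneg {D : Set ℝ} (hD : Convex ℝ D) {f f' : ℝ → ℝ}
    (hf : ∀ x ∈ D, HasDerivAt f (f' x) x) (hf' : ∀ x ∈ D, 0 ≤ f' x) : MonotoneOn f D :=
  monotoneOn_of_hasDerivWithinAt_nonneg hD
    (fun x hx => (hf x hx).continuousAt.continuousWithinAt)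
    (fun x hx => (hf x (interior_subset hx)).hasDerivWithinAt)
    (fun x hx => hf' x (interior_subset hx))

theorem antitoneOn_of_forall_hasDerivAt_nonpos {D : Set ℝ} (hD : Convex ℝ D) {f f' : ℝ → ℝ}
    (hf : ∀ x ∈ D, HasDerivAt f (f' x) x) (hf' : ∀ x ∈ D, f' x ≤ 0) : AntitoneOn f D :=
  antitoneOn_of_hasDerivWithinAt_nonpos hD
    (fun x hx => (hf x hx).continuousAt.continuousWithinAt)
    (fun x hx => (hf x (interior_subset hx)).hasDerivWithinAt)
    (fun x hx => hf' x (interior_subset hx))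

theorem one_add_mul_pos_of_neg_inv_lt {α d : ℝ} (hα : 0 < α) (hd : -(1 / α) < d) :
    0 < 1 + α * d := by
  have := mul_lt_mul_of_pos_left hd hα
  rw [mul_neg, mul_one_div_cancel hα.ne'] at this
  linarith

namespace ActivityIncrement

variable (α κ c : ℝ)

/-- `c` stands for `β + η`. -/
noncomputable def g (d : ℝ) : ℝ := log (1 + α * d) + (κ * α * d ^ 2 - c * d) / (1 + α * d)

def derivNumerator (d : ℝ) : ℝ := κ * α ^ 2 * d ^ 2 + α * (2 * κ + α) * d + (α - c)

noncomputable def criticalPoint : ℝ := (-α - 2 * κ + √(4 * κ * (κ + c) + α ^ 2)) / (2 * κ * α)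

noncomputable def lowerRoot : ℝ := (-α - 2 * κ - √(4 * κ * (κ + c) + α ^ 2)) / (2 * κ * α)

variable {α κ c}

theorem hasDerivAt_g {d : ℝ} (hd : 1 + α * d ≠ 0) :
    HasDerivAt (g α κ c) (derivNumerator α κ c d / (1 + α * d) ^ 2) d := by
  have hlin : HasDerivAt (fun x => 1 + α * x) α d := by
    simpa using ((hasDerivAt_id d).const_mul α).const_add 1
  have hquad : HasDerivAt (fun x => κ * α * x ^ 2 - c * x) (κ * α * (2 * d) - c) d :=
    (((hasDerivAt_pow 2 d).const_mul (κ * α)).sub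
      ((hasDerivAt_id d).const_mul c)).congr_deriv (by norm_num)
  refine (((hasDerivAt_log hd).comp d hlin).add (hquad.div hlin hd)).congr_deriv ?_
  rw [derivNumerator]
  field_simp
  ring

theorem derivNumerator_eq_mul (hα : α ≠ 0) (hκ : κ ≠ 0) (hD : 0 ≤ 4 * κ * (κ + c) + α ^ 2)
    (d : ℝ) :
    derivNumerator α κ c d =
      κ * α ^ 2 * (d - criticalPoint α κ c) * (d - lowerRoot α κ c) := by
  rw [derivNumerator, criticalPoint, lowerRoot]
  set r := √(4 * κ * (κ + c) + α ^ 2)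
  have hsq : r ^ 2 = 4 * κ * (κ + c) + α ^ 2 := sq_sqrt hD
  field_simp
  linear_combination hsq

theorem lowerRoot_le (hα : 0 < α) (hκ : 0 < κ) : lowerRoot α κ c ≤ -(1 / α) := by
  rw [lowerRoot, div_le_iff₀ (by positivity)]
  have : -(1 / α) * (2 * κ * α) = -(2 * κ) := by field_simp
  rw [this]
  linarith [sqrt_nonneg (4 * κ * (κ + c) + α ^ 2)]

theorem derivNumerator_nonpos (hα : 0 < α) (hκ : 0 < κ) (hD : 0 ≤ 4 * κ * (κ + c) + α ^ 2)
    {d : ℝ} (hd : -(1 / α) < d) (hd' : d ≤ criticalPoint α κ c) : derivNumerator α κ c d ≤ 0 := by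
  rw [derivNumerator_eq_mul hα.ne' hκ.ne' hD]
  have := lowerRoot_le (c := c) hα hκ
  exact mul_nonpos_of_nonpos_of_nonneg
    (mul_nonpos_of_nonneg_of_nonpos (by positivity) (by linarith)) (by linarith)

theorem derivNumerator_nonneg (hα : 0 < α) (hκ : 0 < κ) (hD : 0 ≤ 4 * κ * (κ + c) + α ^ 2)
    {d : ℝ} (hd : -(1 / α) < d) (hd' : criticalPoint α κ c ≤ d) : 0 ≤ derivNumerator α κ c d := by
  rw [derivNumerator_eq_mul hα.ne' hκ.ne' hD]
  have := lowerRoot_le (c := c) hα hκ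
  exact mul_nonneg (mul_nonneg (by positivity) (by linarith)) (by linarith)

theorem antitoneOn_g (hα : 0 < α) (hκ : 0 < κ) (hD : 0 ≤ 4 * κ * (κ + c) + α ^ 2) :
    AntitoneOn (g α κ c) (Ioc (-(1 / α)) (criticalPoint α κ c)) :=
  antitoneOn_of_forall_hasDerivAt_nonpos (convex_Ioc _ _)
    (fun _ hd => hasDerivAt_g (one_add_mul_pos_of_neg_inv_lt hα hd.1).ne')
    (fun _ hd => div_nonpos_of_nonpos_of_nonneg (derivNumerator_nonpos hα hκ hD hd.1 hd.2)
      (sq_nonneg _))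

theorem monotoneOn_g (hα : 0 < α) (hκ : 0 < κ) (hD : 0 ≤ 4 * κ * (κ + c) + α ^ 2) :
    MonotoneOn (g α κ c) (Ici (criticalPoint α κ c) ∩ Ioi (-(1 / α))) :=
  monotoneOn_of_forall_hasDerivAt_nonneg ((convex_Ici _).inter (convex_Ioi _))
    (fun _ hd => hasDerivAt_g (one_add_mul_pos_of_neg_inv_lt hα hd.2).ne')
    (fun _ hd => div_nonneg (derivNumerator_nonneg hα hκ hD hd.2 hd.1) (sq_nonneg _))

end ActivityIncrement

open ActivityIncrement in
theorem stmt_3 (α κ β η : ℝ) (hα : 0 < α) (hκ : 0 < κ)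
    (h : 0 < 4 * κ * (κ + β + η) + α ^ 2) :
    let g : ℝ → ℝ := fun d => Real.log (1 + α * d) + (κ * α * d ^ 2 - (β + η) * d) / (1 + α * d)
    let dhat : ℝ := (-α - 2 * κ + Real.sqrt (4 * κ * (κ + β + η) + α ^ 2)) / (2 * κ * α)
    AntitoneOn g (Set.Ioc (-(1 / α)) dhat ∩ Set.Ioi (-(1 / α))) ∧
      MonotoneOn g (Set.Ici dhat ∩ Set.Ioi (-(1 / α))) ∧
      (-(1 / α) < dhat → ∀ d ∈ Set.Ioi (-(1 / α)), g dhat ≤ g d) ∧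
      (dhat ≤ -(1 / α) → MonotoneOn g (Set.Ioi (-(1 / α)))) := by
  intro g' dhat
  have hg : g' = g α κ (β + η) := rfl
  have hdhat : dhat = criticalPoint α κ (β + η) := by simp only [dhat, criticalPoint, add_assoc]
  rw [add_assoc] at h
  have hanti := antitoneOn_g hα hκ h.le
  have hmono := monotoneOn_g hα hκ h.le
  rw [hg, hdhat, inter_eq_left.mpr Ioc_subset_Ioi_self]
  refine ⟨hanti, hmono, fun hlt d hd => ?_, fun hle => ?_⟩
  · rcases le_total d (criticalPoint α κ (β + η)) with hd' | hd'
    · exact hanti ⟨hd, hd'⟩ (right_mem_Ioc.2 hlt) hd'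
    · exact hmono ⟨mem_Ici.2 le_rfl, hlt⟩ ⟨hd', hd⟩ hd'
  · exact hmono.mono fun d hd => ⟨hle.trans hd.out.le, hd⟩
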